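/- Let g, h ∈ ℂ^N. The collections {T_i g : 1 ≤ i ≤ N} and {T_i h : 1 ≤ i ≤ N} are dual frames for ℂ^N, i.e. ⟨f, f₁⟩ = Σ_{i=1}^N ⟨f, T_i g⟩ · ⟨T_i h, f₁⟩ for all f, f₁ ∈ ℂ^N, if and only if conj(ĝ(l)) · ĥ(l) = 1/N for all 1 ≤ l ≤ N. -/

import Mathlib

open scoped ComplexConjugate BigOperators

/-- Graph Fourier transform: `(gft χ f) l = ⟨f, χ_l⟩ = ∑ n, f n * conj (χ l n)`. -/
noncomputable def gft {N : ℕ} (χ : Fin N → EuclideanSpace ℂ (Fin N))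
    (f : EuclideanSpace ℂ (Fin N)) : EuclideanSpace ℂ (Fin N) :=
  WithLp.toLp 2 (fun l => ∑ n, f n * conj (χ l n))

/-- Generalized translation: `(T_i f)(n) = √N · ∑ l, f̂(l) · conj (χ l i) · χ l n`. -/
noncomputable def gtrans {N : ℕ} (χ : Fin N → EuclideanSpace ℂ (Fin N))
    (i : Fin N) (f : EuclideanSpace ℂ (Fin N)) : EuclideanSpace ℂ (Fin N) :=
  WithLp.toLp 2 (fun n => (Real.sqrt N : ℂ) * ∑ l, gft χ f l * conj (χ l i) * χ l n)

/-!
In the basis `χ` the translate `T_i g` has coefficients `√N · ĝ(l) · conj (χ_l(i))`, so by Parseval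
`⟨f, T_i g⟩` is `√N` times the `i`-th coordinate of `∑_l conj (ĝ(l)) f̂(l) χ_l`. Summing the products
`⟨f, T_i g⟩ ⟨T_i h, f₁⟩` over `i` is then an inner product of two such vectors, which orthonormality
evaluates to `N ∑_l conj (ĝ(l)) ĥ(l) f̂(l) conj (f̂₁(l))`. Against Parseval's
`⟨f, f₁⟩ = ∑_l f̂(l) conj (f̂₁(l))` this holds for all `f, f₁` iff `N conj (ĝ(l)) ĥ(l) = 1` for every `l`,
as testing with `f = f₁ = χ_l` shows.
-/

open scoped InnerProductSpace

-- Mathlib's inner product is conjugate-linear in its first argument,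
-- so the paper's `⟨x, y⟩` is `⟪y, x⟫_ℂ`.
lemma EuclideanSpace.sum_mul_conj_eq_inner {ι : Type*} [Fintype ι] (x y : EuclideanSpace ℂ ι) :
    ∑ n, x n * conj (y n) = ⟪y, x⟫_ℂ :=
  rfl

section
variable {N : ℕ} {χ : Fin N → EuclideanSpace ℂ (Fin N)}

lemma gft_apply_eq_inner (f : EuclideanSpace ℂ (Fin N)) (l : Fin N) :
    gft χ f l = ⟪χ l, f⟫_ℂ :=
  rfl

lemma gtrans_eq_sum_smul (i : Fin N) (f : EuclideanSpace ℂ (Fin N)) :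
    gtrans χ i f = (Real.sqrt N : ℂ) • ∑ l, (gft χ f l * conj (χ l i)) • χ l := by
  ext n
  simp [gtrans, Finset.mul_sum]

variable (hχ : Orthonormal ℂ χ)
include hχ

lemma gft_self (l m : Fin N) : gft χ (χ l) m = if m = l then 1 else 0 := by
  rw [gft_apply_eq_inner, orthonormal_iff_ite.mp hχ]

lemma gft_gtrans (i l : Fin N) (f : EuclideanSpace ℂ (Fin N)) :
    gft χ (gtrans χ i f) l = Real.sqrt N * (gft χ f l * conj (χ l i)) := by
  rw [gft_apply_eq_inner, gtrans_eq_sum_smul, inner_smul_right, hχ.inner_right_fintype]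

lemma inner_eq_sum_conj_gft_mul_gft (f₁ f : EuclideanSpace ℂ (Fin N)) :
    ⟪f₁, f⟫_ℂ = ∑ l, conj (gft χ f₁ l) * gft χ f l := by
  have hspan := hχ.linearIndependent.span_eq_top_of_card_eq_finrank' (by simp)
  rw [← (OrthonormalBasis.mk hχ hspan.ge).sum_inner_mul_inner]
  simp [gft_apply_eq_inner]

lemma inner_gtrans_left (i : Fin N) (g f : EuclideanSpace ℂ (Fin N)) :
    ⟪gtrans χ i g, f⟫_ℂ = Real.sqrt N * (∑ l, (conj (gft χ g l) * gft χ f l) • χ l) i := by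
  simp only [inner_eq_sum_conj_gft_mul_gft hχ, gft_gtrans hχ, WithLp.ofLp_sum, WithLp.ofLp_smul,
    Finset.sum_apply, Pi.smul_apply, smul_eq_mul, Finset.mul_sum, map_mul, Complex.conj_ofReal,
    Complex.conj_conj]
  exact Finset.sum_congr rfl fun l _ => by ring

lemma sum_inner_gtrans_mul_inner_gtrans (g h f f₁ : EuclideanSpace ℂ (Fin N)) :
    ∑ i, ⟪gtrans χ i g, f⟫_ℂ * ⟪f₁, gtrans χ i h⟫_ℂ =
      ∑ l, (N * (conj (gft χ g l) * gft χ h l)) * (conj (gft χ f₁ l) * gft χ f l) := by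
  set A := ∑ l, (conj (gft χ g l) * gft χ f l) • χ l
  set B := ∑ l, (conj (gft χ h l) * gft χ f₁ l) • χ l
  have hsqrt : (Real.sqrt N : ℂ) * Real.sqrt N = N := by
    exact_mod_cast Real.mul_self_sqrt (Nat.cast_nonneg N)
  have hterm : ∀ i, ⟪gtrans χ i g, f⟫_ℂ * ⟪f₁, gtrans χ i h⟫_ℂ = N * (conj (B i) * A i) := by
    intro i
    rw [← inner_conj_symm f₁, inner_gtrans_left hχ, inner_gtrans_left hχ, map_mul,
      Complex.conj_ofReal, ← hsqrt]
    ring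
  calc ∑ i, ⟪gtrans χ i g, f⟫_ℂ * ⟪f₁, gtrans χ i h⟫_ℂ = N * ⟪B, A⟫_ℂ := by
        simp_rw [hterm, ← Finset.mul_sum, ← EuclideanSpace.sum_mul_conj_eq_inner, mul_comm]
    _ = _ := by
        rw [hχ.inner_sum, Finset.mul_sum]
        refine Finset.sum_congr rfl fun l _ => ?_
        simp only [map_mul, Complex.conj_conj]
        ring

end

theorem translates_dual_frames_iff_general {N : ℕ}
    (χ : Fin N → EuclideanSpace ℂ (Fin N)) (hχ : Orthonormal ℂ χ)
    (g h : EuclideanSpace ℂ (Fin N)) :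
    (∀ f f₁ : EuclideanSpace ℂ (Fin N),
        (∑ n, f n * conj (f₁ n)) =
          ∑ i : Fin N,
            (∑ n, f n * conj (gtrans χ i g n)) *
              (∑ n, gtrans χ i h n * conj (f₁ n))) ↔
    (∀ l : Fin N, conj (gft χ g l) * gft χ h l = 1 / N) := by
  simp_rw [EuclideanSpace.sum_mul_conj_eq_inner, sum_inner_gtrans_mul_inner_gtrans hχ,
    inner_eq_sum_conj_gft_mul_gft hχ]
  constructor
  · intro H l
    have hN : (N : ℂ) ≠ 0 := by exact_mod_cast l.pos.ne'
    have hl := H (χ l) (χ l)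
    simp only [gft_self hχ, MonoidWithZeroHom.map_ite_one_zero, mul_ite, mul_one, mul_zero,
      Finset.sum_ite_eq', Finset.mem_univ, ↓reduceIte] at hl
    rw [eq_div_iff hN]
    linear_combination -hl
  · intro H f f₁
    refine Finset.sum_congr rfl fun l _ => ?_
    have hN : (N : ℂ) ≠ 0 := by exact_mod_cast l.pos.ne'
    rw [H l, mul_one_div_cancel hN, one_mul]

/-- `{T_i g}` and `{T_i h}` are dual frames for `ℂ^N` iff `conj(ĝ(l))·ĥ(l) = 1/N`
for all `l`. -/
theorem translates_dual_frames_iff {N : ℕ} (hN : 0 < N)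
    (χ : Fin N → EuclideanSpace ℂ (Fin N)) (hχ : Orthonormal ℂ χ)
    (hspan : Submodule.span ℂ (Set.range χ) = ⊤)
    (g h : EuclideanSpace ℂ (Fin N)) :
    (∀ f f₁ : EuclideanSpace ℂ (Fin N),
        (∑ n, f n * conj (f₁ n)) =
          ∑ i : Fin N,
            (∑ n, f n * conj (gtrans χ i g n)) *
              (∑ n, gtrans χ i h n * conj (f₁ n))) ↔
    (∀ l : Fin N, conj (gft χ g l) * gft χ h l = 1 / N) :=
  translates_dual_frames_iff_general χ hχ g h
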